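/- arXiv:2509.13669 — 4 statements merged into one kernel-verified Lean document; each statement's English description precedes it below -/
import Mathlib

section
/- The polynomials P_m defined by P_0(x)=1, P_1(x)=1-(4/3)x, and P_i(x) = ((4i-2)/(2i+1))(1-2x)P_{i-1}(x) - ((2i-3)/(2i+1))P_{i-2}(x) satisfy sup_{x∈[0,1]} √x |P_m(x)| = 1/(2m+1) for every positive integer m. -/
/-- The scaled fourth-kind Chebyshev polynomials `P_m`, defined by the recursion
`P_0(x)=1`, `P_1(x)=1-(4/3)x`,
`P_i(x) = ((4i-2)/(2i+1))(1-2x)P_{i-1}(x) - ((2i-3)/(2i+1))P_{i-2}(x)`. -/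
noncomputable def chebP : ℕ → ℝ → ℝ
  | 0 => fun _ => 1
  | 1 => fun x => 1 - (4/3) * x
  | (i+2) => fun x =>
      ((4*(i+2 : ℝ)-2)/(2*(i+2 : ℝ)+1)) * (1-2*x) * chebP (i+1) x
        - ((2*(i+2 : ℝ)-3)/(2*(i+2 : ℝ)+1)) * chebP i x

lemma cheb_sin (m : ℕ) (θ : ℝ) :
    Real.sin θ * chebP m (Real.sin θ ^ 2) = Real.sin ((2*m+1)*θ) / (2*m+1) := by
  induction m using Nat.twoStepInduction with
  | zero => simp [chebP]
  | one =>
    have h3 : Real.sin (3*θ) = 3 * Real.sin θ - 4 * Real.sin θ ^ 3 := Real.sin_three_mul θ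
    simp only [chebP]
    push_cast
    rw [show (2*(1:ℝ)+1)*θ = 3*θ by ring, h3]
    ring
  | more i ih2 ih1 =>
    have key : Real.sin ((2*((i:ℝ)+2)+1)*θ)
        = 2*Real.cos (2*θ) * Real.sin ((2*((i:ℝ)+1)+1)*θ) - Real.sin ((2*(i:ℝ)+1)*θ) := by
      have h1 := Real.sin_add ((2*((i:ℝ)+1)+1)*θ) (2*θ)
      have h2 := Real.sin_sub ((2*((i:ℝ)+1)+1)*θ) (2*θ)
      rw [show (2*((i:ℝ)+2)+1)*θ = (2*((i:ℝ)+1)+1)*θ + 2*θ by ring, h1,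
        show (2*(i:ℝ)+1)*θ = (2*((i:ℝ)+1)+1)*θ - 2*θ by ring, h2]
      ring
    have hc : Real.cos (2*θ) = 1 - 2 * Real.sin θ ^ 2 := by
      have := Real.sin_sq_add_cos_sq θ
      rw [Real.cos_two_mul]; nlinarith
    simp only [chebP]
    push_cast
    push_cast at ih1 ih2
    have h1 : (2*(i:ℝ)+1) ≠ 0 := by positivity
    have h2 : (2*((i:ℝ)+1)+1) ≠ 0 := by positivity
    have h3 : (2*((i:ℝ)+2)+1) ≠ 0 := by positivity
    field_simp at ih1 ih2 ⊢
    rw [mul_comm θ, key, hc]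
    rw [mul_comm θ] at ih2
    nlinarith [ih1, ih2]

theorem sup_sqrt_mul_abs_chebP (m : ℕ) (hm : 0 < m) :
    sSup ((fun x => Real.sqrt x * |chebP m x|) '' Set.Icc (0:ℝ) 1)
      = 1 / (2*(m:ℝ)+1) := by
  have hden : (0:ℝ) < 2*(m:ℝ)+1 := by positivity
  apply IsGreatest.csSup_eq
  constructor
  · set θ₀ : ℝ := Real.pi / (2*(2*(m:ℝ)+1)) with hθ₀
    have hθpos : 0 ≤ θ₀ := by positivity
    have hθle : θ₀ ≤ Real.pi := by
      rw [hθ₀, div_le_iff₀ (by positivity)]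
      nlinarith [Real.pi_pos]
    have hsin : 0 ≤ Real.sin θ₀ := Real.sin_nonneg_of_nonneg_of_le_pi hθpos hθle
    refine ⟨Real.sin θ₀ ^ 2, ⟨sq_nonneg _, Real.sin_sq_le_one θ₀⟩, ?_⟩
    have hsqrt : Real.sqrt (Real.sin θ₀ ^ 2) = Real.sin θ₀ := by
      rw [Real.sqrt_sq hsin]
    simp only [hsqrt]
    rw [show Real.sin θ₀ * |chebP m (Real.sin θ₀ ^ 2)|
          = |Real.sin θ₀ * chebP m (Real.sin θ₀ ^ 2)| from by
        rw [abs_mul, abs_of_nonneg hsin], cheb_sin m θ₀,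
      show (2*(m:ℝ)+1)*θ₀ = Real.pi/2 by rw [hθ₀]; field_simp,
      Real.sin_pi_div_two, abs_div, abs_one, abs_of_pos hden]
  · rintro y ⟨x, ⟨hx0, hx1⟩, rfl⟩
    set θ := Real.arcsin (Real.sqrt x) with hθ
    have hs : Real.sin θ = Real.sqrt x :=
      Real.sin_arcsin (le_trans (by norm_num) (Real.sqrt_nonneg x)) (Real.sqrt_le_one.mpr hx1)
    have hx : Real.sin θ ^ 2 = x := by rw [hs, Real.sq_sqrt hx0]
    simp only
    calc Real.sqrt x * |chebP m x| = |Real.sin θ * chebP m (Real.sin θ ^ 2)| := by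
          rw [hx, hs, abs_mul, abs_of_nonneg (Real.sqrt_nonneg x)]
      _ = |Real.sin ((2*(m:ℝ)+1)*θ)| / (2*(m:ℝ)+1) := by
          rw [cheb_sin, abs_div, abs_of_pos hden]
      _ ≤ 1 / (2*(m:ℝ)+1) := by
          gcongr
          exact abs_le.mpr ⟨Real.neg_one_le_sin _, Real.sin_le_one _⟩
end

section
/- The polynomials P_m defined by P_0(x)=1, P_1(x)=1-(4/3)x, and P_i(x) = ((4i-2)/(2i+1))(1-2x)P_{i-1}(x) - ((2i-3)/(2i+1))P_{i-2}(x) satisfy sup_{x∈[0,1]} |P_m(x)| = 1 for every positive integer m. -/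
lemma chebP_zero : ∀ m : ℕ, chebP m 0 = 1
  | 0 => rfl
  | 1 => by norm_num [chebP]
  | (i+2) => by
      have h1 := chebP_zero (i+1)
      have h0 := chebP_zero i
      have hne : (2*(i+2:ℝ)+1) ≠ 0 := by positivity
      simp only [chebP, h1, h0]
      field_simp
      ring

lemma chebP_sin : ∀ (m : ℕ) (t : ℝ),
    (2*(m:ℝ)+1) * chebP m (Real.sin t ^ 2) * Real.sin t = Real.sin ((2*(m:ℝ)+1)*t)
  | 0, t => by norm_num [chebP]
  | 1, t => by
      have h3 : (2*(1:ℝ)+1)*t = t + 2*t := by ring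
      push_cast
      rw [h3, Real.sin_add, Real.sin_two_mul, Real.cos_two_mul]
      simp only [chebP]
      linear_combination (-4*Real.sin t) * Real.sin_sq_add_cos_sq t
  | (i+2), t => by
      have h1 := chebP_sin (i+1) t
      have h0 := chebP_sin i t
      have e1 : (2*((i:ℝ)+2)+1)*t = (2*((i:ℝ)+1)+1)*t + 2*t := by ring
      have e0 : (2*(i:ℝ)+1)*t = (2*((i:ℝ)+1)+1)*t - 2*t := by ring
      have hsum : Real.sin ((2*((i:ℝ)+2)+1)*t)
          = 2 * Real.cos (2*t) * Real.sin ((2*((i:ℝ)+1)+1)*t)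
            - Real.sin ((2*(i:ℝ)+1)*t) := by
        rw [e1, e0, Real.sin_add, Real.sin_sub]; ring
      have hc : Real.cos (2*t) = 1 - 2 * Real.sin t ^ 2 := by
        have := Real.sin_sq_add_cos_sq t
        rw [Real.cos_two_mul]; linarith
      have hne : (2*((i:ℝ)+2)+1) ≠ 0 := by positivity
      simp only [chebP]
      push_cast
      push_cast at hsum h1 h0
      rw [hsum, hc, ← h1, ← h0]
      field_simp
      ring

lemma abs_sin_nat_mul_le (n : ℕ) (t : ℝ) :
    |Real.sin ((n:ℝ)*t)| ≤ (n:ℝ) * |Real.sin t| := by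
  induction n with
  | zero => simp
  | succ n ih =>
      have : ((n:ℝ)+1)*t = (n:ℝ)*t + t := by ring
      push_cast
      rw [this, Real.sin_add]
      calc |Real.sin ((n:ℝ)*t) * Real.cos t + Real.cos ((n:ℝ)*t) * Real.sin t|
          ≤ |Real.sin ((n:ℝ)*t) * Real.cos t| + |Real.cos ((n:ℝ)*t) * Real.sin t| :=
            abs_add_le _ _
        _ ≤ |Real.sin ((n:ℝ)*t)| * 1 + 1 * |Real.sin t| := by
            rw [abs_mul, abs_mul]
            gcongr
            · exact Real.abs_cos_le_one t
            · exact Real.abs_cos_le_one _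
        _ ≤ (n:ℝ) * |Real.sin t| * 1 + 1 * |Real.sin t| := by gcongr
        _ = ((n:ℝ)+1) * |Real.sin t| := by ring

lemma abs_chebP_le (m : ℕ) {x : ℝ} (hx : x ∈ Set.Icc (0:ℝ) 1) : |chebP m x| ≤ 1 := by
  obtain ⟨hx0, hx1⟩ := hx
  rcases eq_or_lt_of_le hx0 with h | h
  · rw [← h, chebP_zero]; norm_num
  · set t := Real.arcsin (Real.sqrt x) with ht
    have hs1 : Real.sqrt x ≤ 1 := by
      rw [show (1:ℝ) = Real.sqrt 1 by simp]
      exact Real.sqrt_le_sqrt hx1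
    have hst : Real.sin t = Real.sqrt x :=
      Real.sin_arcsin (by linarith [Real.sqrt_nonneg x]) hs1
    have hsq : Real.sin t ^ 2 = x := by
      rw [hst, Real.sq_sqrt hx0]
    have hpos : 0 < Real.sin t := by rw [hst]; exact Real.sqrt_pos.mpr h
    have key := chebP_sin m t
    rw [hsq] at key
    have hb : |Real.sin ((2*(m:ℝ)+1)*t)| ≤ (2*(m:ℝ)+1) * |Real.sin t| := by
      have := abs_sin_nat_mul_le (2*m+1) t
      push_cast at this
      convert this using 3 <;> ring
    rw [← key, abs_mul, abs_mul, abs_of_pos hpos] at hb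
    have hm1 : (0:ℝ) < 2*(m:ℝ)+1 := by positivity
    rw [abs_of_pos hm1] at hb
    nlinarith [hb, mul_pos hm1 hpos]

theorem sup_abs_chebP (m : ℕ) (hm : 0 < m) :
    sSup ((fun x => |chebP m x|) '' Set.Icc (0:ℝ) 1) = 1 := by
  have hmem : (1:ℝ) ∈ (fun x => |chebP m x|) '' Set.Icc (0:ℝ) 1 := by
    refine ⟨0, by norm_num, ?_⟩
    simp [chebP_zero]
  have hub : ∀ y ∈ (fun x => |chebP m x|) '' Set.Icc (0:ℝ) 1, y ≤ 1 := by
    rintro y ⟨x, hx, rfl⟩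
    exact abs_chebP_le m hx
  apply le_antisymm
  · exact csSup_le ⟨1, hmem⟩ hub
  · exact le_csSup ⟨1, hub⟩ hmem
end

section
/- Let A be symmetric positive definite with diagonal D, C = D^{-1/2} A D^{-1/2}, and ω > 0 with ω ρ(C) ≤ 1. If P_m is a polynomial satisfying sup_{x∈[0,1]} √x |P_m(x)| = 1/(2m+1), then for every vector v, ‖C P_m(ω C) v‖² ≤ (1/(ω(2m+1)²)) vᵀ C v, where ‖·‖ is the Euclidean norm. -/
open Matrix Polynomial

/-- The spectral radius of a real matrix, as the supremum of the absolute values of its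
(real) eigenvalues. -/
noncomputable def specRad {ι : Type*} [Fintype ι] (M : Matrix ι ι ℝ) : ℝ :=
  sSup {r : ℝ | ∃ μ : ℝ, (∃ v : ι → ℝ, v ≠ 0 ∧ M *ᵥ v = μ • v) ∧ r = |μ|}

lemma myconj_pow {n : ℕ} (U D V : Matrix (Fin n) (Fin n) ℝ) (hVU : V * U = 1) (k : ℕ) :
    (U * D * V) ^ k * U = U * D ^ k := by
  induction k with
  | zero => simp
  | succ k ih =>
      calc (U * D * V) ^ (k+1) * U = (U * D * V) ^ k * U * (D * (V * U)) := by
            rw [pow_succ]; noncomm_ring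
        _ = U * D ^ k * (D * 1) := by rw [ih, hVU]
        _ = U * D ^ (k+1) := by rw [mul_one, pow_succ, mul_assoc]

lemma myaeval_conj {n : ℕ} (U D V : Matrix (Fin n) (Fin n) ℝ) (hVU : V * U = 1)
    (hUV : U * V = 1) (p : ℝ[X]) :
    aeval (U * D * V) p = U * (aeval D p) * V := by
  induction p using Polynomial.induction_on' with
  | add p q hp hq => simp [map_add, hp, hq, Matrix.mul_add, Matrix.add_mul]
  | monomial k a =>
      rw [aeval_monomial, aeval_monomial, Algebra.algebraMap_eq_smul_one]
      have h1 : (U * D * V) ^ k = U * D ^ k * V := by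
        calc (U * D * V) ^ k = (U * D * V) ^ k * U * V := by rw [mul_assoc _ U V, hUV, mul_one]
          _ = U * D ^ k * V := by rw [myconj_pow U D V hVU k]
      rw [h1, smul_mul_assoc, smul_mul_assoc, one_mul, one_mul, mul_smul_comm, smul_mul_assoc]

lemma myaeval_diagonal {n : ℕ} (d : Fin n → ℝ) (p : ℝ[X]) :
    aeval (Matrix.diagonal d) p = Matrix.diagonal (fun i => p.eval (d i)) := by
  induction p using Polynomial.induction_on' with
  | add p q hp hq => simp [map_add, hp, hq, diagonal_add]
  | monomial k a =>
      rw [aeval_monomial, Algebra.algebraMap_eq_smul_one]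
    
      simp [diagonal_pow, eval_monomial, Matrix.diagonal_mul_diagonal, smul_mul_assoc,
        ← Matrix.diagonal_smul]

theorem pre_smoothing_bound {n : ℕ} (A : Matrix (Fin n) (Fin n) ℝ)
    (hA : A.PosDef) (ω : ℝ) (hω : 0 < ω) (m : ℕ) (P : Polynomial ℝ)
    (hsup : sSup ((fun x => Real.sqrt x * |P.eval x|) '' Set.Icc (0:ℝ) 1)
      = 1 / (2*(m:ℝ)+1)) :
    let Dh : Matrix (Fin n) (Fin n) ℝ := Matrix.diagonal fun i => Real.sqrt (A i i)
    let Cm := Dh⁻¹ * A * Dh⁻¹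
    ω * specRad Cm ≤ 1 →
    ∀ v : Fin n → ℝ,
      (Cm *ᵥ ((Polynomial.aeval (ω • Cm) P) *ᵥ v)) ⬝ᵥ (Cm *ᵥ ((Polynomial.aeval (ω • Cm) P) *ᵥ v))
        ≤ (1 / (ω * (2*(m:ℝ)+1)^2)) * (v ⬝ᵥ (Cm *ᵥ v)) := by
  intro Dh Cm hrad v
  -- diagonal entries of A are positive
  have hAd : ∀ i, 0 < A i i := by
    intro i
    have h := hA.dotProduct_mulVec_pos (x := Pi.single i 1) (by simp [Function.ne_iff])
    simpa using h
  have hDh : Dh.PosDef := Matrix.PosDef.diagonal (fun i => Real.sqrt_pos.2 (hAd i))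
  have hDhinv : (Dh⁻¹).PosDef := hDh.inv
  have hDhinvT : (Dh⁻¹)ᵀ = Dh⁻¹ := by
    have := hDhinv.1
    rw [Matrix.IsHermitian] at this
    simpa using this
  -- Cm is positive definite
  have hCm : Cm.PosDef := by
    refine Matrix.PosDef.of_dotProduct_mulVec_pos ?_ ?_
    · have h := Matrix.isHermitian_mul_mul_conjTranspose (Dh⁻¹) hA.1
      rw [show (Dh⁻¹)ᴴ = Dh⁻¹ from hDhinv.1] at h
      exact h
    · intro x hx
      have hy : Dh⁻¹ *ᵥ x ≠ 0 := by
        intro h0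
        apply hx
        have hinj := Matrix.mulVec_injective_iff_isUnit.mpr hDhinv.isUnit
        have : Dh⁻¹ *ᵥ x = Dh⁻¹ *ᵥ 0 := by simpa using h0
        exact hinj this
      have h := hA.dotProduct_mulVec_pos hy
      have heq : star x ⬝ᵥ (Cm *ᵥ x) = star (Dh⁻¹ *ᵥ x) ⬝ᵥ (A *ᵥ (Dh⁻¹ *ᵥ x)) := by
        show x ⬝ᵥ ((Dh⁻¹ * A * Dh⁻¹) *ᵥ x) = (Dh⁻¹ *ᵥ x) ⬝ᵥ (A *ᵥ (Dh⁻¹ *ᵥ x))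
        rw [← Matrix.mulVec_mulVec, ← Matrix.mulVec_mulVec, Matrix.dotProduct_mulVec,
          ← Matrix.mulVec_transpose, hDhinvT]
      rw [heq]
      exact h
  have hH := hCm.1
  set U : Matrix (Fin n) (Fin n) ℝ := (hH.eigenvectorUnitary : Matrix (Fin n) (Fin n) ℝ) with hUdef
  set lam : Fin n → ℝ := hH.eigenvalues with hlamdef
  have hUV : U * star U = 1 := Unitary.coe_mul_star_self _
  have hVU : star U * U = 1 := Unitary.coe_star_mul_self _
  have hspec : Cm = U * Matrix.diagonal lam * star U := by
    have h := hH.spectral_theorem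
    simpa using h
  -- star U is the transpose
  have hsU : star U = Uᵀ := by
    ext i j
    simp [Matrix.star_eq_conjTranspose, Matrix.conjTranspose_apply]
  -- U preserves the dot product
  have hUdot : ∀ a b : Fin n → ℝ, (U *ᵥ a) ⬝ᵥ (U *ᵥ b) = a ⬝ᵥ b := by
    intro a b
    rw [Matrix.dotProduct_mulVec, ← Matrix.mulVec_transpose, ← hsU, Matrix.mulVec_mulVec,
      hVU, Matrix.one_mulVec]
  -- eigenvalues are bounded by the spectral radius
  have hmul_le : ∀ i, ω * lam i ≤ 1 := by
    intro i
    have hmem : |lam i| ∈ {r : ℝ | ∃ μ : ℝ, (∃ x : Fin n → ℝ, x ≠ 0 ∧ Cm *ᵥ x = μ • x) ∧ r = |μ|} := by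
      refine ⟨lam i, ⟨⇑(hH.eigenvectorBasis i), ?_, hH.mulVec_eigenvectorBasis i⟩, rfl⟩
      have := hH.eigenvectorBasis.orthonormal.ne_zero i
      intro h0
      apply this
      ext j
      exact congrFun h0 j
    have hsub : {r : ℝ | ∃ μ : ℝ, (∃ x : Fin n → ℝ, x ≠ 0 ∧ Cm *ᵥ x = μ • x) ∧ r = |μ|}
        ⊆ Set.range (fun j => |lam j|) := by
      rintro r ⟨μ, ⟨x, hx0, hx⟩, rfl⟩
      set w := star U *ᵥ x with hwdef
      have hUw : U *ᵥ w = x := by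
        rw [hwdef, Matrix.mulVec_mulVec, hUV, Matrix.one_mulVec]
      have hw0 : w ≠ 0 := by
        intro h0
        apply hx0
        rw [← hUw, h0, Matrix.mulVec_zero]
      have hDw : Matrix.diagonal lam *ᵥ w = μ • w := by
        have h1 : star U *ᵥ (Cm *ᵥ x) = Matrix.diagonal lam *ᵥ w := by
          rw [hspec, Matrix.mulVec_mulVec, ← Matrix.mul_assoc, ← Matrix.mul_assoc, hVU,
            Matrix.one_mul, ← Matrix.mulVec_mulVec]
        rw [hx] at h1
        rw [← h1, Matrix.mulVec_smul]
      obtain ⟨j, hj⟩ := Function.ne_iff.mp hw0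
      simp only [Pi.zero_apply] at hj
      refine ⟨j, ?_⟩
      have h2 := congrFun hDw j
      rw [Matrix.mulVec_diagonal] at h2
      simp only [Pi.smul_apply, smul_eq_mul] at h2
      have h3 : lam j = μ := mul_right_cancel₀ hj h2
      show |lam j| = |μ|
      rw [h3]
    have hbdd : BddAbove {r : ℝ | ∃ μ : ℝ, (∃ x : Fin n → ℝ, x ≠ 0 ∧ Cm *ᵥ x = μ • x) ∧ r = |μ|} :=
      ((Set.finite_range _).bddAbove).mono hsub
    have hle : lam i ≤ specRad Cm := by
      rw [specRad]
      exact le_trans (le_abs_self _) (le_csSup hbdd hmem)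
    calc ω * lam i ≤ ω * specRad Cm := by nlinarith
      _ ≤ 1 := hrad
  -- eigenvalues are positive
  have hlam_pos : ∀ i, 0 < lam i := fun i => hCm.eigenvalues_pos i
  -- scalar inequality
  have hscalar : ∀ i, (lam i * P.eval (ω * lam i))^2 ≤ (1 / (ω * (2*(m:ℝ)+1)^2)) * lam i := by
    intro i
    set x := ω * lam i with hxdef
    have hx0 : 0 < x := mul_pos hω (hlam_pos i)
    have hx1 : x ≤ 1 := hmul_le i
    have hmemx : Real.sqrt x * |P.eval x| ∈
        ((fun x => Real.sqrt x * |P.eval x|) '' Set.Icc (0:ℝ) 1) :=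
      ⟨x, ⟨hx0.le, hx1⟩, rfl⟩
    have hbddx : BddAbove ((fun x => Real.sqrt x * |P.eval x|) '' Set.Icc (0:ℝ) 1) := by
      apply IsCompact.bddAbove_image isCompact_Icc
      exact (Real.continuous_sqrt.mul (continuous_abs.comp (Polynomial.continuous P))).continuousOn
    have h1 : Real.sqrt x * |P.eval x| ≤ 1 / (2*(m:ℝ)+1) := hsup ▸ le_csSup hbddx hmemx
    have hnn : 0 ≤ Real.sqrt x * |P.eval x| := mul_nonneg (Real.sqrt_nonneg x) (abs_nonneg _)
    have h2 : x * (P.eval x)^2 ≤ (1 / (2*(m:ℝ)+1))^2 := by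
      have hm := mul_self_le_mul_self hnn h1
      have e1 : (Real.sqrt x * |P.eval x|) * (Real.sqrt x * |P.eval x|) = x * (P.eval x)^2 := by
        rw [mul_mul_mul_comm, Real.mul_self_sqrt hx0.le, abs_mul_abs_self]
        ring
      rw [e1] at hm
      calc x * (P.eval x)^2 ≤ (1 / (2*(m:ℝ)+1)) * (1 / (2*(m:ℝ)+1)) := hm
        _ = (1 / (2*(m:ℝ)+1))^2 := by ring
    have hc : (0:ℝ) < 2*(m:ℝ)+1 := by positivity
    have h3 : lam i * (P.eval x)^2 ≤ 1 / (ω * (2*(m:ℝ)+1)^2) := by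
      rw [le_div_iff₀ (by positivity)]
      have h2' : x * (P.eval x)^2 * (2*(m:ℝ)+1)^2 ≤ 1 := by
        have := mul_le_mul_of_nonneg_right h2 (sq_nonneg (2*(m:ℝ)+1))
        have e2 : (1 / (2*(m:ℝ)+1))^2 * (2*(m:ℝ)+1)^2 = 1 := by
          field_simp
        linarith [this, e2 ▸ this]
      calc lam i * (P.eval x)^2 * (ω * (2*(m:ℝ)+1)^2)
          = x * (P.eval x)^2 * (2*(m:ℝ)+1)^2 := by rw [hxdef]; ring
        _ ≤ 1 := h2'
    calc (lam i * P.eval x)^2 = lam i * (lam i * (P.eval x)^2) := by ring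
      _ ≤ lam i * (1 / (ω * (2*(m:ℝ)+1)^2)) := by
          exact mul_le_mul_of_nonneg_left h3 (hlam_pos i).le
      _ = (1 / (ω * (2*(m:ℝ)+1)^2)) * lam i := by ring
  -- diagonalize the polynomial expression
  have hscaled : ω • Cm = U * Matrix.diagonal (fun i => ω * lam i) * star U := by
    have e : U * (ω • Matrix.diagonal lam) * star U = ω • Cm := by
      rw [hspec, Matrix.mul_smul, Matrix.smul_mul]
    rw [← e]
    congr 1
    congr 1
    ext i j
    by_cases h : i = j <;> simp [Matrix.diagonal, h]
  have haeval : (aeval (ω • Cm) P : Matrix (Fin n) (Fin n) ℝ)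
      = U * Matrix.diagonal (fun i => P.eval (ω * lam i)) * star U := by
    rw [hscaled, myaeval_conj _ _ _ hVU hUV, myaeval_diagonal]
  have hkey : Cm * (aeval (ω • Cm) P : Matrix (Fin n) (Fin n) ℝ)
      = U * Matrix.diagonal (fun i => lam i * P.eval (ω * lam i)) * star U := by
    rw [haeval, hspec]
    calc (U * Matrix.diagonal lam * star U) * (U * Matrix.diagonal (fun i => P.eval (ω * lam i)) * star U)
        = U * Matrix.diagonal lam * ((star U * U) * (Matrix.diagonal (fun i => P.eval (ω * lam i)) * star U)) := by
          noncomm_ring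
      _ = U * (Matrix.diagonal lam * Matrix.diagonal (fun i => P.eval (ω * lam i))) * star U := by
          rw [hVU, Matrix.one_mul]; noncomm_ring
      _ = U * Matrix.diagonal (fun i => lam i * P.eval (ω * lam i)) * star U := by
          rw [Matrix.diagonal_mul_diagonal]
  -- put everything together
  set w : Fin n → ℝ := star U *ᵥ v with hwdef
  have hUw : U *ᵥ w = v := by
    rw [hwdef, Matrix.mulVec_mulVec, hUV, Matrix.one_mulVec]
  set g : Fin n → ℝ := fun i => lam i * P.eval (ω * lam i) with hgdef
  have hLHS : (Cm *ᵥ ((aeval (ω • Cm) P : Matrix (Fin n) (Fin n) ℝ) *ᵥ v))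
      ⬝ᵥ (Cm *ᵥ ((aeval (ω • Cm) P : Matrix (Fin n) (Fin n) ℝ) *ᵥ v))
      = (Matrix.diagonal g *ᵥ w) ⬝ᵥ (Matrix.diagonal g *ᵥ w) := by
    rw [Matrix.mulVec_mulVec, hkey, ← Matrix.mulVec_mulVec, ← Matrix.mulVec_mulVec, hUdot]
  have hRHS : v ⬝ᵥ (Cm *ᵥ v) = w ⬝ᵥ (Matrix.diagonal lam *ᵥ w) := by
    conv_lhs => rw [hspec, ← Matrix.mulVec_mulVec, ← Matrix.mulVec_mulVec, ← hUw]
    rw [hUdot]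
    have e : star U *ᵥ (U *ᵥ w) = w := by
      rw [Matrix.mulVec_mulVec, hVU, Matrix.one_mulVec]
    rw [e]
  rw [hLHS, hRHS]
  simp only [dotProduct, Matrix.mulVec_diagonal, Finset.mul_sum]
  apply Finset.sum_le_sum
  intro i _
  have hsc : (g i)^2 ≤ 1 / (ω * (2*(m:ℝ)+1)^2) * lam i := hscalar i
  nlinarith [mul_nonneg (sub_nonneg.2 hsc) (sq_nonneg (w i))]
end

section
/- Let A be a symmetric positive semidefinite n×n matrix. Suppose each index i has a set N(i) ⊆ {1,…,n} with card N(i) ≤ s such that A_{ij} = 0 whenever j ∉ N(i), and |A_{ij}| ≤ √(A_{ii} A_{jj}) for all i,j. Then uᵀAu ≤ s·uᵀDu for all u ∈ ℝⁿ, where D = diag(A); consequently ρ(D^{-1}A) ≤ s if D is positive definite. -/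
open Matrix

theorem sparse_rayleigh_bound {n s : ℕ} (A : Matrix (Fin n) (Fin n) ℝ)
    (hA : A.PosSemidef)
    (N : Fin n → Finset (Fin n)) (hcard : ∀ i, (N i).card ≤ s)
    (hzero : ∀ i j, j ∉ N i → A i j = 0)
    (hCS : ∀ i j, |A i j| ≤ Real.sqrt (A i i * A j j)) :
    let D : Matrix (Fin n) (Fin n) ℝ := Matrix.diagonal fun i => A i i
    (∀ u : Fin n → ℝ, u ⬝ᵥ (A *ᵥ u) ≤ (s:ℝ) * (u ⬝ᵥ (D *ᵥ u))) ∧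
    (D.PosDef → specRad (D⁻¹ * A) ≤ (s:ℝ)) := by
  classical
  intro D
  have hDdef : D = Matrix.diagonal fun i => A i i := rfl
  have hsym : ∀ i j, A j i = A i j := fun i j => hA.1.apply i j
  have hdiag : ∀ i, 0 ≤ A i i := fun i => by
    exact hA.diag_nonneg
  have hDquad : ∀ u : Fin n → ℝ, u ⬝ᵥ (D *ᵥ u) = ∑ i, A i i * u i ^ 2 := by
    intro u
    rw [hDdef]
    simp only [dotProduct, mulVec_diagonal]
    exact Finset.sum_congr rfl fun i _ => by ring
  have key : ∀ u : Fin n → ℝ, u ⬝ᵥ (A *ᵥ u) ≤ (s:ℝ) * ∑ i, A i i * u i ^ 2 := by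
    intro u
    set g : Fin n → ℝ := fun i => A i i * u i ^ 2 with hg
    have hgnn : ∀ i, 0 ≤ g i := fun i => mul_nonneg (hdiag i) (sq_nonneg _)
    have hterm : ∀ i j, u i * (A i j * u j) ≤
        (if A i j ≠ 0 then g i / 2 else 0) + (if A i j ≠ 0 then g j / 2 else 0) := by
      intro i j
      by_cases h : A i j = 0
      · simp [h]
      · simp only [if_pos h]
        have h1 : u i * (A i j * u j) ≤ |A i j| * (|u i| * |u j|) := by
          calc u i * (A i j * u j) ≤ |u i * (A i j * u j)| := le_abs_self _
            _ = |A i j| * (|u i| * |u j|) := by rw [abs_mul, abs_mul]; ring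
        have h2 : |A i j| * (|u i| * |u j|) ≤
            (Real.sqrt (A i i) * |u i|) * (Real.sqrt (A j j) * |u j|) := by
          have hcs := hCS i j
          rw [Real.sqrt_mul (hdiag i)] at hcs
          have hnn : 0 ≤ |u i| * |u j| := mul_nonneg (abs_nonneg _) (abs_nonneg _)
          calc |A i j| * (|u i| * |u j|)
              ≤ (Real.sqrt (A i i) * Real.sqrt (A j j)) * (|u i| * |u j|) :=
                mul_le_mul_of_nonneg_right hcs hnn
            _ = (Real.sqrt (A i i) * |u i|) * (Real.sqrt (A j j) * |u j|) := by ring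
        have e1 : (Real.sqrt (A i i) * |u i|) ^ 2 = g i := by
          rw [mul_pow, Real.sq_sqrt (hdiag i), sq_abs]
        have e2 : (Real.sqrt (A j j) * |u j|) ^ 2 = g j := by
          rw [mul_pow, Real.sq_sqrt (hdiag j), sq_abs]
        nlinarith [sq_nonneg (Real.sqrt (A i i) * |u i| - Real.sqrt (A j j) * |u j|)]
    have hexp : u ⬝ᵥ (A *ᵥ u) = ∑ i, ∑ j, u i * (A i j * u j) := by
      simp [dotProduct, mulVec, Finset.mul_sum]
    have hcard1 : ∀ i, ((Finset.univ.filter fun j => A i j ≠ 0).card : ℝ) ≤ (s : ℝ) := by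
      intro i
      have hsub : (Finset.univ.filter fun j => A i j ≠ 0) ⊆ N i := by
        intro j hj
        simp only [Finset.mem_filter] at hj
        by_contra hmem
        exact hj.2 (hzero i j hmem)
      exact_mod_cast (Finset.card_le_card hsub).trans (hcard i)
    have hcard2 : ∀ j, ((Finset.univ.filter fun i => A i j ≠ 0).card : ℝ) ≤ (s : ℝ) := by
      intro j
      have hsub : (Finset.univ.filter fun i => A i j ≠ 0) ⊆ N j := by
        intro i hi
        simp only [Finset.mem_filter] at hi
        by_contra hmem
        exact hi.2 (by rw [hsym j i]; exact hzero j i hmem)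
      exact_mod_cast (Finset.card_le_card hsub).trans (hcard j)
    have hsum1 : ∑ i, ∑ j, (if A i j ≠ 0 then g i / 2 else 0) ≤ (s:ℝ) * (∑ i, g i) / 2 := by
      have step : ∀ i : Fin n, ∑ j, (if A i j ≠ 0 then g i / 2 else 0)
          ≤ (s:ℝ) * (g i / 2) := by
        intro i
        rw [← Finset.sum_filter, Finset.sum_const, nsmul_eq_mul]
        have hnn : (0:ℝ) ≤ g i / 2 := by linarith [hgnn i]
        exact mul_le_mul_of_nonneg_right (hcard1 i) hnn
      calc ∑ i, ∑ j, (if A i j ≠ 0 then g i / 2 else 0)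
          ≤ ∑ i, (s:ℝ) * (g i / 2) := Finset.sum_le_sum fun i _ => step i
        _ = (s:ℝ) * (∑ i, g i) / 2 := by rw [← Finset.mul_sum, ← Finset.sum_div]; ring
    have hsum2 : ∑ i, ∑ j, (if A i j ≠ 0 then g j / 2 else 0) ≤ (s:ℝ) * (∑ i, g i) / 2 := by
      rw [Finset.sum_comm]
      have step : ∀ j : Fin n, ∑ i, (if A i j ≠ 0 then g j / 2 else 0)
          ≤ (s:ℝ) * (g j / 2) := by
        intro j
        rw [← Finset.sum_filter, Finset.sum_const, nsmul_eq_mul]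
        have hnn : (0:ℝ) ≤ g j / 2 := by linarith [hgnn j]
        exact mul_le_mul_of_nonneg_right (hcard2 j) hnn
      calc ∑ j, ∑ i, (if A i j ≠ 0 then g j / 2 else 0)
          ≤ ∑ j, (s:ℝ) * (g j / 2) := Finset.sum_le_sum fun j _ => step j
        _ = (s:ℝ) * (∑ i, g i) / 2 := by rw [← Finset.mul_sum, ← Finset.sum_div]; ring
    calc u ⬝ᵥ (A *ᵥ u) = ∑ i, ∑ j, u i * (A i j * u j) := hexp
      _ ≤ ∑ i, ∑ j, ((if A i j ≠ 0 then g i / 2 else 0) + (if A i j ≠ 0 then g j / 2 else 0)) :=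
          Finset.sum_le_sum fun i _ => Finset.sum_le_sum fun j _ => hterm i j
      _ = (∑ i, ∑ j, (if A i j ≠ 0 then g i / 2 else 0))
          + (∑ i, ∑ j, (if A i j ≠ 0 then g j / 2 else 0)) := by
          simp [Finset.sum_add_distrib]
      _ ≤ (s:ℝ) * (∑ i, g i) / 2 + (s:ℝ) * (∑ i, g i) / 2 := add_le_add hsum1 hsum2
      _ = (s:ℝ) * ∑ i, g i := by ring
  refine ⟨fun u => by rw [hDquad]; exact key u, ?_⟩
  intro hDpd
  apply Real.sSup_le
  · rintro r ⟨μ, ⟨v, hv, hev⟩, rfl⟩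
    have hDdet : IsUnit D.det := (isUnit_iff_isUnit_det D).1 hDpd.isUnit
    have hAv : A *ᵥ v = μ • (D *ᵥ v) := by
      have h1 : D *ᵥ ((D⁻¹ * A) *ᵥ v) = A *ᵥ v := by
        rw [mulVec_mulVec, ← Matrix.mul_assoc, Matrix.mul_nonsing_inv D hDdet,
          Matrix.one_mul]
      rw [← h1, hev, mulVec_smul]
    have hq : 0 < v ⬝ᵥ (D *ᵥ v) := by
      have h := hDpd.dotProduct_mulVec_pos hv
      simpa using h
    have hAq : v ⬝ᵥ (A *ᵥ v) = μ * (v ⬝ᵥ (D *ᵥ v)) := by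
      rw [hAv, dotProduct_smul, smul_eq_mul]
    have h0 : 0 ≤ v ⬝ᵥ (A *ᵥ v) := by
      have h := hA.dotProduct_mulVec_nonneg v
      simpa using h
    have hbd : v ⬝ᵥ (A *ᵥ v) ≤ (s:ℝ) * (v ⬝ᵥ (D *ᵥ v)) := by
      rw [hDquad]; exact key v
    have hμ0 : 0 ≤ μ := by nlinarith
    have hμs : μ ≤ (s:ℝ) := by nlinarith
    rw [abs_of_nonneg hμ0]; exact hμs
  · exact Nat.cast_nonneg s
end
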